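/- arXiv:1903.12552 — 4 statements merged into one kernel-verified Lean document; each statement's English description precedes it below -/
import Mathlib

section
/- Let G ∈ F_q^{k×(k+t−1)} be a generator matrix of a [k+t−1, k] MDS code, β ≥ 1, and let q ∈ F_q^{α×β(k+t−1)} be a matrix such that for every set T ⊆ [k+t−1] of size t, the rank of the submatrix of q consisting of the β-thick columns indexed by T equals the number of nonzero columns of that submatrix. Then rank((G ⊗ 1_β) ⊙ q) = |colsupp(q)|, i.e., the rank of the column-wise Khatri-Rao product of G ⊗ 1_β with q equals the number of nonzero columns of q. -/
/-!
It suffices that a vector `v` in the kernel of `(G ⊗ 1_β) ⊙ q` vanishes on every nonzero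
column `p₀ = (c₀, s₀)` of `q`. Put `c₀` in a set `T` of `t` thick columns. By the MDS property
some codeword `y G` has support exactly `T`, and contracting the `G`-factor of the Khatri–Rao
product against `y` shows that `w : (c, s) ↦ (y G)_c v_(c,s)` lies in the kernel of `q`; as `w`
vanishes off `T`, it lies in the kernel of the columns of `q` over `T`. There the nonzero
columns are independent, so `(y G)_{c₀} v_{p₀} = 0` with `(y G)_{c₀} ≠ 0`.
-/

open Matrix

section LinearIndependent

variable {R M ι : Type*} [Ring R] [AddCommGroup M] [Module R M] [Fintype ι]

theorem linearIndependent_subtype_iff_of_eq_zero {v : ι → M} {P : ι → Prop}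
    (hv : ∀ j, ¬ P j → v j = 0) :
    LinearIndependent R (fun j : {j // P j} => v j) ↔
      ∀ c : ι → R, ∑ j, c j • v j = 0 → ∀ j, P j → c j = 0 := by
  classical
  rw [Fintype.linearIndependent_iff]
  constructor
  · intro h c hc j hj
    refine h (fun j => c j) ?_ ⟨j, hj⟩
    rw [← hc]
    refine Fintype.sum_of_injective _ Subtype.val_injective _ _ (fun j hj => ?_) fun _ => rfl
    rw [hv j fun hPj => hj ⟨⟨j, hPj⟩, rfl⟩, smul_zero]
  · intro h g hg j
    have := h (fun j => if hj : P j then g ⟨j, hj⟩ else 0) ?_ j j.2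
    · simpa [j.2] using this
    rw [← hg]
    refine (Fintype.sum_of_injective _ Subtype.val_injective _ _ (fun j hj => ?_) fun j => ?_).symm
    · rw [dif_neg fun hPj => hj ⟨⟨j, hPj⟩, rfl⟩, zero_smul]
    · rw [dif_pos j.2]

end LinearIndependent

namespace Matrix

variable {F m n : Type*} [Field F] [Fintype n]

theorem rank_eq_card_filter_iff [Fintype m] (A : Matrix m n F) (P : n → Prop)
    [DecidablePred P] (hP : ∀ j, ¬ P j → ∀ i, A i j = 0) :
    A.rank = (Finset.univ.filter P).card ↔ ∀ v, A *ᵥ v = 0 → ∀ j, P j → v j = 0 := by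
  have hzero : ∀ j, ¬ P j → A.col j = 0 := fun j hj => funext (hP j hj)
  have hspan : Submodule.span F (Set.range A.col) =
      Submodule.span F (Set.range fun j : {j // P j} => A.col j) := by
    refine le_antisymm (Submodule.span_le.mpr ?_) (Submodule.span_mono ?_)
    · rintro _ ⟨j, rfl⟩
      by_cases hj : P j
      · exact Submodule.subset_span ⟨⟨j, hj⟩, rfl⟩
      · simp [hzero j hj]
    · rintro _ ⟨j, rfl⟩
      exact ⟨j, rfl⟩
  rw [rank_eq_finrank_span_cols, hspan, ← Set.finrank, ← Fintype.card_subtype, eq_comm,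
    ← linearIndependent_iff_card_eq_finrank_span, linearIndependent_subtype_iff_of_eq_zero hzero]
  simp only [mulVec_eq_sum, op_smul_eq_smul]
  rfl

theorem exists_ne_zero_vecMul_eq_zero_of_card_lt [Fintype m] (A : Matrix m n F)
    (h : Fintype.card n < Fintype.card m) : ∃ y ≠ 0, y ᵥ* A = 0 := by
  have hdep : ¬ LinearIndependent F A := fun hA =>
    (hA.fintype_card_le_finrank.trans_eq (Module.finrank_fintype_fun_eq_card F)).not_gt h
  obtain ⟨y, hy, j, hj⟩ := Fintype.not_linearIndependent_iff.mp hdep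
  exact ⟨y, fun h0 => hj (congrFun h0 j), by rwa [vecMul_eq_sum]⟩

theorem submatrix_val_mulVec_of_eq_zero {P : n → Prop} [DecidablePred P] (A : Matrix m n F)
    {w : n → F} (hw : ∀ j, ¬ P j → w j = 0) :
    A.submatrix id (Subtype.val : {j // P j} → n) *ᵥ (fun j => w j) = A *ᵥ w := by
  ext i
  refine Fintype.sum_of_injective _ Subtype.val_injective _ _ (fun j hj => ?_) fun _ => rfl
  rw [hw j fun hPj => hj ⟨⟨j, hPj⟩, rfl⟩, mul_zero]

theorem mulVec_vecMul_mul_eq_zero_of_khatriRao_mulVec_eq_zero {k : Type*} [Fintype k]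
    (H : Matrix k n F) (q : Matrix m n F) {v : n → F}
    (hv : (fun (ia : k × m) j => H ia.1 j * q ia.2 j) *ᵥ v = 0) (y : k → F) :
    q *ᵥ (fun j => (y ᵥ* H) j * v j) = 0 := by
  ext a
  calc (q *ᵥ fun j => (y ᵥ* H) j * v j) a
      = ∑ i, y i * ((fun (ia : k × m) j => H ia.1 j * q ia.2 j) *ᵥ v) (i, a) := by
        simp only [mulVec, vecMul, dotProduct, Finset.mul_sum, Finset.sum_mul]
        rw [Finset.sum_comm]
        exact Finset.sum_congr rfl fun j _ => Finset.sum_congr rfl fun i _ => by ring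
    _ = 0 := by simp [hv]

end Matrix

section MDS

variable {F ι : Type*} [Field F] {k : ℕ} {G : Matrix (Fin k) ι F}

theorem eq_zero_of_vecMul_eq_zero_on_card_eq
    (hMDS : ∀ s : Fin k ↪ ι, IsUnit (G.submatrix id s).det) {S : Finset ι} (hS : S.card = k)
    {y : Fin k → F} (hy : ∀ c ∈ S, (y ᵥ* G) c = 0) : y = 0 := by
  subst hS
  let s : Fin S.card ↪ ι := S.equivFin.symm.toEmbedding.trans (Function.Embedding.subtype _)
  have hys : y ᵥ* G.submatrix id s = 0 := funext fun j => hy (s j) (S.equivFin.symm j).2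
  by_contra hy0
  exact (hMDS s).ne_zero (exists_vecMul_eq_zero_iff.mp ⟨y, hy0, hys⟩)

theorem exists_vecMul_ne_zero_iff_mem [Fintype ι] [DecidableEq ι]
    (hMDS : ∀ s : Fin k ↪ ι, IsUnit (G.submatrix id s).det) (T : Finset ι)
    (hT : Tᶜ.card + 1 = k) :
    ∃ y : Fin k → F, ∀ c, (y ᵥ* G) c ≠ 0 ↔ c ∈ T := by
  obtain ⟨y, hy0, hy⟩ := exists_ne_zero_vecMul_eq_zero_of_card_lt
    (G.submatrix id (Subtype.val : ↥Tᶜ → ι))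
    (by simp only [Fintype.card_coe, Fintype.card_fin]; omega)
  have hyT : ∀ c ∉ T, (y ᵥ* G) c = 0 := fun c hc => congrFun hy ⟨c, Finset.mem_compl.mpr hc⟩
  refine ⟨y, fun c => ⟨fun hc => by_contra fun hcT => hc (hyT c hcT), fun hc hyc => hy0 ?_⟩⟩
  refine eq_zero_of_vecMul_eq_zero_on_card_eq hMDS (S := insert c Tᶜ) ?_ ?_
  · rw [Finset.card_insert_of_notMem (by simpa using hc), hT]
  · intro d hd
    rcases Finset.mem_insert.mp hd with rfl | hd
    · exact hyc
    · exact hyT d (Finset.mem_compl.mp hd)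

end MDS

theorem rank_kron_khatriRao_eq_colsupp_general {F : Type*} [Field F] [DecidableEq F]
    {k t α β : ℕ} (hk : 1 ≤ k) (ht : 1 ≤ t)
    (G : Matrix (Fin k) (Fin (k + t - 1)) F)
    -- MDS: every `k × k` submatrix of `G` is invertible
    (hMDS : ∀ s : Fin k ↪ Fin (k + t - 1), IsUnit (G.submatrix id s).det)
    (q : Matrix (Fin α) (Fin (k + t - 1) × Fin β) F)
    -- full support-rank: for every set `T` of `t` thick columns, the rank of the
    -- corresponding submatrix of `q` equals its number of nonzero columns
    (hq : ∀ T : Finset (Fin (k + t - 1)), T.card = t →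
      (Matrix.rank (fun (i : Fin α) (p : {p : Fin (k + t - 1) × Fin β // p.1 ∈ T}) =>
          q i p.1))
        = (Finset.univ.filter (fun p : {p : Fin (k + t - 1) × Fin β // p.1 ∈ T} =>
            ∃ i, q i p.1 ≠ 0)).card) :
    Matrix.rank (fun (ia : Fin k × Fin α) (p : Fin (k + t - 1) × Fin β) =>
        G ia.1 p.1 * q ia.2 p)
      = (Finset.univ.filter (fun p : Fin (k + t - 1) × Fin β => ∃ i, q i p ≠ 0)).card := by
  refine (rank_eq_card_filter_iff _ _ fun p hp ia => ?_).mpr fun v hv p₀ hp₀ => ?_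
  · simp [not_exists_not.mp hp ia.2]
  obtain ⟨T, hp₀T, hT⟩ : ∃ T : Finset (Fin (k + t - 1)), {p₀.1} ⊆ T ∧ T.card = t :=
    Finset.exists_superset_card_eq (by simpa using ht) (by simp only [Fintype.card_fin]; omega)
  rw [Finset.singleton_subset_iff] at hp₀T
  obtain ⟨y, hy⟩ := exists_vecMul_ne_zero_iff_mem hMDS T
    (by rw [Finset.card_compl, Fintype.card_fin, hT]; omega)
  let w : Fin (k + t - 1) × Fin β → F := fun p => (y ᵥ* G) p.1 * v p
  have hw : ∀ p, p.1 ∉ T → w p = 0 := fun p hp => by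
    simp only [w, not_not.mp (mt (hy p.1).mp hp), zero_mul]
  have hqw : q *ᵥ w = 0 :=
    mulVec_vecMul_mul_eq_zero_of_khatriRao_mulVec_eq_zero (G.submatrix id Prod.fst) q hv y
  have hqT := (rank_eq_card_filter_iff (fun i (p : {p : Fin (k + t - 1) × Fin β // p.1 ∈ T}) =>
    q i p.1) (fun p => ∃ i, q i p.1 ≠ 0) fun _ hp => not_exists_not.mp hp).mp (hq T hT)
  have hwp₀ :=
    hqT (fun p => w p) ((submatrix_val_mulVec_of_eq_zero q hw).trans hqw) ⟨p₀, hp₀T⟩ hp₀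
  exact (mul_eq_zero.mp hwp₀).resolve_left ((hy _).mpr hp₀T)

/-- Rank of the column-wise Khatri-Rao product of an MDS generator matrix (with each
column repeated `β` times) with a query matrix `q` of full support-rank: it equals the
number of nonzero columns of `q`. Columns are indexed by pairs `(i, s)` where `i` is a
server (thick-column) index and `s ∈ [β]` an iteration index. -/
theorem rank_kron_khatriRao_eq_colsupp {F : Type*} [Field F] [DecidableEq F]
    {k t α β : ℕ} (hk : 1 ≤ k) (ht : 1 ≤ t) (hβ : 1 ≤ β)
    (G : Matrix (Fin k) (Fin (k + t - 1)) F)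
    -- MDS: every `k × k` submatrix of `G` is invertible
    (hMDS : ∀ s : Fin k ↪ Fin (k + t - 1), IsUnit (G.submatrix id s).det)
    (q : Matrix (Fin α) (Fin (k + t - 1) × Fin β) F)
    -- full support-rank: for every set `T` of `t` thick columns, the rank of the
    -- corresponding submatrix of `q` equals its number of nonzero columns
    (hq : ∀ T : Finset (Fin (k + t - 1)), T.card = t →
      (Matrix.rank (fun (i : Fin α) (p : {p : Fin (k + t - 1) × Fin β // p.1 ∈ T}) =>
          q i p.1))
        = (Finset.univ.filter (fun p : {p : Fin (k + t - 1) × Fin β // p.1 ∈ T} =>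
            ∃ i, q i p.1 ≠ 0)).card) :
    Matrix.rank (fun (ia : Fin k × Fin α) (p : Fin (k + t - 1) × Fin β) =>
        G ia.1 p.1 * q ia.2 p)
      = (Finset.univ.filter (fun p : Fin (k + t - 1) × Fin β => ∃ i, q i p ≠ 0)).card :=
  rank_kron_khatriRao_eq_colsupp_general hk ht G hMDS q hq
end

section
/- Let G ∈ F_q^{k×n} generate an [n,k] MDS code, let X be uniformly distributed over F_q^{αm×k}, and Y = X·G. Let q ∈ F_q^{αm×βn} satisfy: for every T ⊆ [n] with |T| = t and every nonempty F ⊆ [m], the rank of the submatrix q[ψ_α(F), ψ_β(T)] equals the number of its nonzero columns. Then for every N ⊆ [n] with |N| = k+t−1 ≤ n and every nonempty F ⊆ [m], the entropy (in q-ary units) of the random row vector Σ_{l ∈ ψ_α(F)} (Y[l, N] ⊗ 1_β) ⋆ q[l, ψ_β(N)] equals |colsupp(q[ψ_α(F), ψ_β(N)])|. -/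
/-- Entropy in `b`-ary units of a probability mass function on a finite type. -/
noncomputable def pmfQEntropy {Ω : Type*} [Fintype Ω] (b : ℕ) (p : PMF Ω) : ℝ :=
  -∑ z, ((p z).toReal * Real.logb b (p z).toReal)

/-!
The responses are a linear image of the uniform `X`, hence uniform on that image, so their
entropy is its dimension. The response at a zero column of `q[ψ_α(F), ψ_β(N)]` vanishes, and the
responses at the nonzero columns satisfy no linear relation: given one with coefficient `c` at a
column `p₀`, interpolate (MDS) a codeword `a·G` equal to `1` at the server of `p₀` and to `0` at
`k - 1` further servers of `N`. Feeding the storage `X = e_r ⊗ a` into the relation, for every row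
`r`, yields a relation among the nonzero columns of `q` at the `t` servers outside those `k - 1`,
which are independent by the full support-rank property; its coefficient at `p₀` is `c`, so
`c = 0`.
-/

open Finset

theorem pmfQEntropy_uniformOfFinset {Ω : Type*} [Fintype Ω] (b : ℕ) (s : Finset Ω)
    (hs : s.Nonempty) : pmfQEntropy b (PMF.uniformOfFinset s hs) = Real.logb b #s := by
  have hs₀ : (#s : ℝ) ≠ 0 := by simp [hs.ne_empty]
  rw [pmfQEntropy, ← sum_subset (subset_univ s) fun z _ hz => by
      simp [PMF.uniformOfFinset_apply_of_notMem hs hz],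
    sum_congr rfl fun z hz => by rw [PMF.uniformOfFinset_apply_of_mem hs hz]]
  simp only [sum_const, nsmul_eq_mul, ENNReal.toReal_inv, ENNReal.toReal_natCast, Real.logb_inv]
  field_simp

theorem PMF.map_uniformOfFintype_apply {α β : Type*} [Fintype α] [Nonempty α] [DecidableEq β]
    (f : α → β) (b : β) :
    PMF.map f (PMF.uniformOfFintype α) b = #{a | f a = b} / Fintype.card α := by
  simp [PMF.map_apply, tsum_fintype, PMF.uniformOfFintype_apply, eq_comm, sum_ite,
    div_eq_mul_inv]

theorem PMF.map_addMonoidHom_uniformOfFintype {V W : Type*} [AddGroup V] [Fintype V]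
    [AddMonoid W] [DecidableEq W] (f : V →+ W) :
    PMF.map f (PMF.uniformOfFintype V) =
      PMF.uniformOfFinset (univ.image f) (univ_nonempty.image f) := by
  ext w
  rw [PMF.map_uniformOfFintype_apply, PMF.uniformOfFinset_apply]
  split_ifs with hw
  · have hfiber : ∀ w' ∈ univ.image f, #{v | f v = w'} = #{v | f v = w} := fun w' hw' =>
      AddMonoidHom.card_fiber_eq_of_mem_range f (by simpa using hw') (by simpa using hw)
    have hcard : Fintype.card V = #(univ.image f) * #{v | f v = w} := by
      rw [← card_univ, card_eq_sum_card_fiberwise fun v _ => mem_image_of_mem f (mem_univ v),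
        sum_congr rfl hfiber, sum_const, smul_eq_mul]
    have hfiber₀ : (#{v | f v = w} : ENNReal) ≠ 0 := by
      obtain ⟨v, -, rfl⟩ := mem_image.mp hw
      exact Nat.cast_ne_zero.mpr (card_ne_zero.mpr ⟨v, by simp⟩)
    rw [hcard, Nat.cast_mul, ENNReal.div_eq_inv_mul, ENNReal.mul_inv (by simp) (by simp),
      mul_assoc, ENNReal.inv_mul_cancel hfiber₀ (by simp), mul_one]
  · rw [filter_false_of_mem fun v _ h => hw (mem_image.mpr ⟨v, mem_univ v, h⟩)]
    simp

theorem pmfQEntropy_map_linearMap_uniformOfFintype {F V W : Type*} [Field F] [Fintype F]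
    [AddCommGroup V] [Module F V] [Fintype V] [AddCommGroup W] [Module F W] [Fintype W]
    [DecidableEq W] (L : V →ₗ[F] W) :
    pmfQEntropy (Fintype.card F) (PMF.map L (PMF.uniformOfFintype V)) =
      Module.finrank F (LinearMap.range L) := by
  have hcard : #(univ.image L) = Fintype.card F ^ Module.finrank F (LinearMap.range L) := by
    rw [← Nat.card_eq_fintype_card (α := F), ← Module.natCard_eq_pow_finrank,
      ← Set.toFinset_range, Set.toFinset_card, ← Nat.card_eq_fintype_card]
    exact Nat.card_congr (Equiv.setCongr (LinearMap.coe_range L).symm)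
  rw [← LinearMap.toAddMonoidHom_coe, PMF.map_addMonoidHom_uniformOfFintype,
    pmfQEntropy_uniformOfFinset, LinearMap.toAddMonoidHom_coe, hcard, Nat.cast_pow,
    Real.logb_pow, Real.logb_self_eq_one (by exact_mod_cast Fintype.one_lt_card), mul_one]

theorem LinearMap.surjective_of_forall_sum_mul_eq_zero {F V ι : Type*} [Field F]
    [AddCommGroup V] [Module F V] [Fintype ι] (f : V →ₗ[F] ι → F)
    (h : ∀ c : ι → F, (∀ x, ∑ i, c i * f x i = 0) → c = 0) : Function.Surjective f := by
  classical
  rw [← LinearMap.range_eq_top, ← Submodule.dualAnnihilator_eq_bot_iff, eq_bot_iff]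
  intro φ hφ
  rw [Submodule.mem_dualAnnihilator] at hφ
  have hφ_apply : ∀ w, φ w = ∑ i, φ (fun j => if i = j then 1 else 0) * w i := fun w => by
    simp only [LinearMap.pi_apply_eq_sum_univ φ w, smul_eq_mul, mul_comm]
  have hc := h _ fun x => (hφ_apply (f x)).symm.trans (hφ _ (LinearMap.mem_range_self f x))
  refine (Submodule.mem_bot F).mpr (LinearMap.ext fun w => ?_)
  simp [hφ_apply w, funext_iff.mp hc]

namespace Matrix

variable {m n F : Type*} [Fintype m] [Fintype n] [Field F]

def colSupp {R : Type*} [Zero R] [DecidableEq R] (A : Matrix m n R) : Finset n :=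
  {p | ∃ r, A r p ≠ 0}

theorem linearIndepOn_colSupp_of_rank_eq [DecidableEq F] (A : Matrix m n F)
    (h : A.rank = #A.colSupp) : LinearIndepOn F A.col A.colSupp := by
  have hrange : Set.range (fun p : (A.colSupp : Set n) => A.col p) = Set.range A.col \ {0} := by
    ext v
    simp only [Set.mem_range, Set.mem_sdiff, Set.mem_singleton_iff, Subtype.exists, mem_coe,
      colSupp, mem_filter, mem_univ, true_and, exists_prop]
    constructor
    · rintro ⟨p, ⟨r, hr⟩, rfl⟩
      exact ⟨⟨p, rfl⟩, fun h => hr (congrFun h r)⟩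
    · rintro ⟨⟨p, rfl⟩, hp⟩
      obtain ⟨r, hr⟩ := Function.ne_iff.mp hp
      exact ⟨p, ⟨r, hr⟩, rfl⟩
  unfold LinearIndepOn
  rw [linearIndependent_iff_card_eq_finrank_span, Set.finrank, hrange,
    Submodule.span_sdiff_singleton_zero, ← rank_eq_finrank_span_cols, h]
  simp

theorem exists_vecMul_eq_on_of_isUnit_det {k : ℕ} {ν : Type*} (G : Matrix (Fin k) ν F)
    (hG : ∀ e : Fin k ↪ ν, IsUnit (G.submatrix id e).det) {D : Finset ν} (hD : #D = k)
    (y : ν → F) : ∃ a : Fin k → F, ∀ j ∈ D, (a ᵥ* G) j = y j := by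
  let e : Fin k ↪ ν :=
    (D.equivFinOfCardEq hD).symm.toEmbedding.trans (Function.Embedding.subtype _)
  have he : ∀ j ∈ D, ∃ l, e l = j := fun j hj => ⟨D.equivFinOfCardEq hD ⟨j, hj⟩, by simp [e]⟩
  refine ⟨(y ∘ e) ᵥ* (G.submatrix id e)⁻¹, fun j hj => ?_⟩
  obtain ⟨l, rfl⟩ := he j hj
  have : (y ∘ e) ᵥ* (G.submatrix id e)⁻¹ ᵥ* G.submatrix id e = y ∘ e := by
    rw [vecMul_vecMul, nonsing_inv_mul _ (hG e), vecMul_one]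
  exact congrFun this l

end Matrix

section Response

open Matrix

variable {F ρ κ ν : Type*} [Field F] [Fintype ρ] {k : ℕ}

/-- With `Y = X * G`, rows `r` of `Q` playing the role of `ψ_α(F)` and `π` sending a column
`(j, b)` of `ψ_β(N)` to its server `j`, this is `Σ_r (Y[r, N] ⊗ 1_β) ⋆ Q[r, ·]`. -/
def responseMap (G : Matrix (Fin k) ν F) (π : κ → ν) (Q : Matrix ρ κ F) :
    Matrix ρ (Fin k) F →ₗ[F] κ → F where
  toFun X p := ∑ r, (X * G) r (π p) * Q r p
  map_add' X Y := by ext p; simp [Matrix.add_mul, add_mul, sum_add_distrib]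
  map_smul' c X := by ext p; simp [mul_sum, mul_assoc]

variable (G : Matrix (Fin k) ν F) (π : κ → ν) (Q : Matrix ρ κ F)

theorem responseMap_apply_single [DecidableEq ρ] (r : ρ) (a : Fin k → F) (p : κ) :
    responseMap G π Q (Matrix.of (Pi.single r a)) p = (a ᵥ* G) (π p) * Q r p := by
  simp [responseMap, Matrix.mul_apply, Pi.single_apply, ite_apply, ite_mul, vecMul, dotProduct]

variable [Fintype κ]

theorem responseMap_apply_of_notMem_colSupp [DecidableEq F] {p : κ} (hp : p ∉ Q.colSupp)
    (X : Matrix ρ (Fin k) F) : responseMap G π Q X p = 0 := by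
  simp only [colSupp, mem_filter, mem_univ, true_and, not_exists, not_not] at hp
  simp [responseMap, hp]

variable [Fintype ν] [DecidableEq ν] [DecidableEq F] {t : ℕ}

theorem surjective_funLeft_colSupp_comp_responseMap (hk : 1 ≤ k) (ht : 1 ≤ t)
    (hν : Fintype.card ν = k + t - 1) (hG : ∀ e : Fin k ↪ ν, IsUnit (G.submatrix id e).det)
    (hQ : ∀ T : Finset ν, #T = t → LinearIndepOn F Q.col ↑{p ∈ Q.colSupp | π p ∈ T}) :
    Function.Surjective
      (LinearMap.funLeft F F (Subtype.val : Q.colSupp → κ) ∘ₗ responseMap G π Q) := by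
  classical
  refine LinearMap.surjective_of_forall_sum_mul_eq_zero _ fun c hc => funext fun p₀ => ?_
  obtain ⟨D, hp₀D, hD⟩ : ∃ D : Finset ν, {π p₀} ⊆ D ∧ #D = k :=
    exists_superset_card_eq (by simpa using hk) (by omega)
  rw [singleton_subset_iff] at hp₀D
  obtain ⟨a, ha⟩ := G.exists_vecMul_eq_on_of_isUnit_det hG hD (Pi.single (π p₀) 1)
  set T := insert (π p₀) Dᶜ
  have hT : #T = t := by
    rw [card_insert_of_notMem (by simpa using hp₀D), card_compl, hν, hD]
    omega
  have ha_T : ∀ j ∉ T, (a ᵥ* G) j = 0 := fun j hj => by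
    simp only [T, mem_insert, mem_compl, not_or, not_not] at hj
    rw [ha j hj.2, Pi.single_eq_of_ne hj.1]
  have hrel : ∑ p : Q.colSupp, (c p * (a ᵥ* G) (π p)) • Q.col p = 0 := funext fun r => by
    simpa [responseMap_apply_single, mul_assoc] using hc (Matrix.of (Pi.single r a))
  have hindep : LinearIndepOn F (fun p : Q.colSupp => Q.col p)
      ↑({p | π p.1 ∈ T} : Finset Q.colSupp) := by
    refine LinearIndepOn.comp_of_image ((hQ T hT).mono ?_) Subtype.val_injective.injOn
    rintro _ ⟨p, hp, rfl⟩
    simpa using hp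
  have hcoeff := linearIndepOn_finset_iff.mp hindep (fun p => c p * (a ᵥ* G) (π p))
    (by rw [sum_filter_of_ne fun p _ hp => by_contra fun h => hp (by simp [ha_T _ h])]
        exact hrel)
    p₀ (by simp [T])
  simpa [ha _ hp₀D] using hcoeff

theorem finrank_range_responseMap (hk : 1 ≤ k) (ht : 1 ≤ t) (hν : Fintype.card ν = k + t - 1)
    (hG : ∀ e : Fin k ↪ ν, IsUnit (G.submatrix id e).det)
    (hQ : ∀ T : Finset ν, #T = t → LinearIndepOn F Q.col ↑{p ∈ Q.colSupp | π p ∈ T}) :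
    Module.finrank F (LinearMap.range (responseMap G π Q)) = #Q.colSupp := by
  set Φ := LinearMap.funLeft F F (Subtype.val : Q.colSupp → κ) ∘ₗ responseMap G π Q
  have hker : LinearMap.ker Φ = LinearMap.ker (responseMap G π Q) := by
    ext X
    simp only [LinearMap.mem_ker, funext_iff, Φ, LinearMap.comp_apply, LinearMap.funLeft_apply,
      Pi.zero_apply, Subtype.forall]
    exact ⟨fun h p => by_cases (h p) fun hp => responseMap_apply_of_notMem_colSupp G π Q hp X,
      fun h p _ => h p⟩
  have hΦ := LinearMap.range_eq_top.mpr
    (surjective_funLeft_colSupp_comp_responseMap G π Q hk ht hν hG hQ)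
  have hΦ_rank := LinearMap.finrank_range_add_finrank_ker Φ
  have hrank := LinearMap.finrank_range_add_finrank_ker (responseMap G π Q)
  rw [hΦ, finrank_top, Module.finrank_fintype_fun_eq_card, Fintype.card_coe, hker] at hΦ_rank
  omega

end Response

theorem linearIndepOn_col_of_rank_submatrix_eq {F ρ ν β : Type*} [Field F] [DecidableEq F]
    [Fintype ρ] [Fintype ν] [DecidableEq ν] [Fintype β] {t : ℕ} (A : Matrix ρ (ν × β) F)
    (hA : ∀ T : Finset ν, #T = t →
      (A.submatrix id (Subtype.val : {p : ν × β // p.1 ∈ T} → ν × β)).rank =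
        #(A.submatrix id (Subtype.val : {p : ν × β // p.1 ∈ T} → ν × β)).colSupp)
    (N : Finset ν) (T : Finset N) (hT : #T = t) :
    LinearIndepOn F (A.submatrix id (Subtype.val : {p : ν × β // p.1 ∈ N} → ν × β)).col
      ↑{p ∈ (A.submatrix id (Subtype.val : {p : ν × β // p.1 ∈ N} → ν × β)).colSupp |
        (⟨p.1.1, p.2⟩ : N) ∈ T} := by
  set T' := T.map (Function.Embedding.subtype _)
  have hT' := Matrix.linearIndepOn_colSupp_of_rank_eq _ (hA T' (by rw [card_map, hT]))
  refine LinearIndepOn.comp_of_image (f := Subtype.val)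
    ((hT'.image_of_comp Subtype.val A.col).mono ?_) Subtype.val_injective.injOn
  rintro _ ⟨p, hp, rfl⟩
  simp only [coe_filter, Set.mem_ofPred_eq, Matrix.colSupp, mem_filter, mem_univ, true_and] at hp
  exact ⟨⟨p.1, mem_map.mpr ⟨_, hp.2, rfl⟩⟩, mem_coe.mpr (mem_filter.mpr ⟨mem_univ _, hp.1⟩), rfl⟩

theorem entropy_responses_eq_colsupp_general {F : Type*} [Field F] [Fintype F] [DecidableEq F]
    {n k t m α β : ℕ} (hk : 1 ≤ k) (ht : 1 ≤ t)
    (G : Matrix (Fin k) (Fin n) F)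
    -- MDS: every `k` columns of `G` are linearly independent
    (hMDS : ∀ s : Fin k ↪ Fin n, IsUnit (G.submatrix id s).det)
    (q : Matrix (Fin m × Fin α) (Fin n × Fin β) F)
    -- full support-rank: for every `T` of `t` servers and nonempty file set `Fs`,
    -- the rank of `q[ψ_α(Fs), ψ_β(T)]` equals its number of nonzero columns
    (hq : ∀ T : Finset (Fin n), T.card = t → ∀ Fs : Finset (Fin m), Fs.Nonempty →
      Matrix.rank (fun (r : {r : Fin m × Fin α // r.1 ∈ Fs})
          (p : {p : Fin n × Fin β // p.1 ∈ T}) => q r.1 p.1)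
        = (Finset.univ.filter (fun p : {p : Fin n × Fin β // p.1 ∈ T} =>
            ∃ r : {r : Fin m × Fin α // r.1 ∈ Fs}, q r.1 p.1 ≠ 0)).card)
    (N : Finset (Fin n)) (hN : N.card = k + t - 1)
    (Fs : Finset (Fin m)) (hFs : Fs.Nonempty) :
    pmfQEntropy (Fintype.card F)
        (PMF.map
          (fun X : Matrix (Fin m × Fin α) (Fin k) F =>
            fun p : {p : Fin n × Fin β // p.1 ∈ N} =>
              ∑ r ∈ Finset.univ.filter (fun r : Fin m × Fin α => r.1 ∈ Fs),
                (X * G) r p.1.1 * q r p.1)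
          (PMF.uniformOfFintype (Matrix (Fin m × Fin α) (Fin k) F)))
      = (Finset.univ.filter (fun p : {p : Fin n × Fin β // p.1 ∈ N} =>
          ∃ r : {r : Fin m × Fin α // r.1 ∈ Fs}, q r.1 p.1 ≠ 0)).card := by
  let A : Matrix {r : Fin m × Fin α // r.1 ∈ Fs} (Fin n × Fin β) F := q.submatrix Subtype.val id
  let restrictRows : Matrix (Fin m × Fin α) (Fin k) F →ₗ[F]
      Matrix {r : Fin m × Fin α // r.1 ∈ Fs} (Fin k) F :=
    LinearMap.funLeft F (Fin k → F) Subtype.val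
  let R := responseMap (G.submatrix id (Subtype.val : N → Fin n))
    (fun p : {p : Fin n × Fin β // p.1 ∈ N} => (⟨p.1.1, p.2⟩ : N))
    (A.submatrix id (Subtype.val : {p : Fin n × Fin β // p.1 ∈ N} → Fin n × Fin β))
  have hresp : (fun (X : Matrix (Fin m × Fin α) (Fin k) F) (p : {p : Fin n × Fin β // p.1 ∈ N}) =>
      ∑ r ∈ univ.filter (fun r : Fin m × Fin α => r.1 ∈ Fs), (X * G) r p.1.1 * q r p.1) =
      ⇑(R ∘ₗ restrictRows) := by
    ext X p
    exact sum_subtype _ (p := fun r : Fin m × Fin α => r.1 ∈ Fs) (by simp) _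
  have hrestrict : LinearMap.range restrictRows = ⊤ := LinearMap.range_eq_top.mpr
    (LinearMap.funLeft_surjective_of_injective _ _ _ Subtype.val_injective)
  rw [hresp, pmfQEntropy_map_linearMap_uniformOfFintype,
    LinearMap.range_comp_of_range_eq_top _ hrestrict,
    finrank_range_responseMap _ _ _ hk ht (by rw [Fintype.card_coe, hN])
      (fun e => hMDS (e.trans (Function.Embedding.subtype _)))
      (linearIndepOn_col_of_rank_submatrix_eq A (fun T hT => hq T hT Fs hFs) N)]
  rfl

/-- For a uniformly distributed MDS-coded storage `Y = X·G` and a query matrix `q` of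
full support-rank, the entropy (in `q`-ary units, `q = |F|`) of the responses
`Σ_{l ∈ ψ_α(F)} (Y[l,N] ⊗ 1_β) ⋆ q[l, ψ_β(N)]` of any `k+t-1` servers `N` equals the
number of nonzero columns of `q[ψ_α(F), ψ_β(N)]`. Rows of `q` are indexed by pairs
(file, stripe) and columns by pairs (server, iteration). -/
theorem entropy_responses_eq_colsupp {F : Type*} [Field F] [Fintype F] [DecidableEq F]
    {n k t m α β : ℕ} (hk : 1 ≤ k) (ht : 1 ≤ t) (hβ : 1 ≤ β) (hktn : k + t - 1 ≤ n)
    (G : Matrix (Fin k) (Fin n) F)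
    -- MDS: every `k` columns of `G` are linearly independent
    (hMDS : ∀ s : Fin k ↪ Fin n, IsUnit (G.submatrix id s).det)
    (q : Matrix (Fin m × Fin α) (Fin n × Fin β) F)
    -- full support-rank: for every `T` of `t` servers and nonempty file set `Fs`,
    -- the rank of `q[ψ_α(Fs), ψ_β(T)]` equals its number of nonzero columns
    (hq : ∀ T : Finset (Fin n), T.card = t → ∀ Fs : Finset (Fin m), Fs.Nonempty →
      Matrix.rank (fun (r : {r : Fin m × Fin α // r.1 ∈ Fs})
          (p : {p : Fin n × Fin β // p.1 ∈ T}) => q r.1 p.1)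
        = (Finset.univ.filter (fun p : {p : Fin n × Fin β // p.1 ∈ T} =>
            ∃ r : {r : Fin m × Fin α // r.1 ∈ Fs}, q r.1 p.1 ≠ 0)).card)
    (N : Finset (Fin n)) (hN : N.card = k + t - 1)
    (Fs : Finset (Fin m)) (hFs : Fs.Nonempty) :
    pmfQEntropy (Fintype.card F)
        (PMF.map
          (fun X : Matrix (Fin m × Fin α) (Fin k) F =>
            fun p : {p : Fin n × Fin β // p.1 ∈ N} =>
              ∑ r ∈ Finset.univ.filter (fun r : Fin m × Fin α => r.1 ∈ Fs),
                (X * G) r p.1.1 * q r p.1)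
          (PMF.uniformOfFintype (Matrix (Fin m × Fin α) (Fin k) F)))
      = (Finset.univ.filter (fun p : {p : Fin n × Fin β // p.1 ∈ N} =>
          ∃ r : {r : Fin m × Fin α // r.1 ∈ Fs}, q r.1 p.1 ≠ 0)).card :=
  entropy_responses_eq_colsupp_general hk ht G hMDS q hq N hN Fs hFs
end

section
/- Han's inequality: Let W_1, ..., W_n be jointly distributed random variables with finite ranges, and let 1 ≤ k ≤ n. Then (k/n)·H(W_1,...,W_n) ≤ (1/C(n,k)) · Σ_{T ⊆ [n], |T| = k} H(W_T), where H(W_T) denotes the joint entropy of the variables indexed by T and C(n,k) is the binomial coefficient. -/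
/-- Shannon entropy (natural units) of a probability mass function on a finite type. -/
noncomputable def pmfEntropy {Ω : Type*} [Fintype Ω] (p : PMF Ω) : ℝ :=
  -∑ z, ((p z).toReal * Real.log (p z).toReal)

namespace HansAux
open Real Finset

variable {Ω : Type*} [Fintype Ω]

open Classical in
noncomputable def wt (P : Ω → ℝ) {A : Type*} (f : Ω → A) (a : A) : ℝ :=
  ∑ ω, if f ω = a then P ω else 0

noncomputable def ent (P : Ω → ℝ) {A : Type*} [Fintype A] (f : Ω → A) : ℝ :=
  ∑ a, Real.negMulLog (wt P f a)

variable {P : Ω → ℝ}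

lemma wt_nonneg (hP : ∀ ω, 0 ≤ P ω) {A : Type*} (f : Ω → A) (a : A) : 0 ≤ wt P f a := by
  classical
  refine Finset.sum_nonneg fun ω _ => ?_
  split <;> simp [hP ω]

lemma sum_wt {A : Type*} [Fintype A] (f : Ω → A) : ∑ a, wt P f a = ∑ ω, P ω := by
  classical
  unfold wt
  rw [Finset.sum_comm]
  simp [Finset.sum_ite_eq]

open Classical in
lemma wt_comp {A B : Type*} [Fintype A] (f : Ω → A) (φ : A → B) (b : B) :
    wt P (φ ∘ f) b = ∑ a, if φ a = b then wt P f a else 0 := by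
  classical
  unfold wt
  have h1 : ∀ a : A, (if φ a = b then ∑ ω, if f ω = a then P ω else 0 else 0)
      = ∑ ω, if f ω = a ∧ φ (f ω) = b then P ω else 0 := by
    intro a
    by_cases h : φ a = b
    · simp only [h, if_true]
      refine Finset.sum_congr rfl fun ω _ => ?_
      by_cases hfa : f ω = a <;> simp [hfa, h]
    · simp only [h, if_false]
      symm
      refine Finset.sum_eq_zero fun ω _ => ?_
      by_cases hfa : f ω = a <;> simp [hfa, h]
  simp only [h1]
  rw [Finset.sum_comm]
  refine Finset.sum_congr rfl fun ω _ => ?_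
  by_cases h : φ (f ω) = b <;> simp [h, Function.comp, Finset.sum_ite_eq]

lemma wt_le_wt_comp (hP : ∀ ω, 0 ≤ P ω) {A B : Type*} [Fintype A] (f : Ω → A)
    (φ : A → B) (a : A) : wt P f a ≤ wt P (φ ∘ f) (φ a) := by
  classical
  rw [wt_comp]
  have := Finset.single_le_sum (f := fun a' => if φ a' = φ a then wt P f a' else 0)
    (fun a' _ => by split <;> simp [wt_nonneg hP]) (Finset.mem_univ a)
  simpa using this

lemma sum_wt_mul_comp {A B : Type*} [Fintype A] [Fintype B] (f : Ω → A) (φ : A → B)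
    (r : B → ℝ) : ∑ a, wt P f a * r (φ a) = ∑ b, wt P (φ ∘ f) b * r b := by
  classical
  simp only [wt_comp, Finset.sum_mul]
  rw [Finset.sum_comm]
  refine Finset.sum_congr rfl fun a _ => ?_
  rw [Finset.sum_eq_single (φ a)]
  · simp
  · intro b _ hb
    rw [if_neg fun hc => hb hc.symm, zero_mul]
  · simp

lemma wt_snd_pair {A C : Type*} [Fintype A] [Fintype C] (f : Ω → A) (h : Ω → C) (c : C) :
    ∑ a, wt P (fun ω => (f ω, h ω)) (a, c) = wt P h c := by
  classical
  have h1 : wt P h c = wt P (Prod.snd ∘ fun ω => (f ω, h ω)) c := rfl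
  rw [h1, wt_comp]
  simp [Fintype.sum_prod_type, Finset.sum_ite_eq']

lemma ent_comp_inj {A B : Type*} [Fintype A] [Fintype B] (f : Ω → A) {φ : A → B}
    (hφ : Function.Injective φ) : ent P (φ ∘ f) = ent P f := by
  classical
  unfold ent
  rw [← Finset.sum_subset (Finset.subset_univ ((univ : Finset A).image φ))]
  · rw [Finset.sum_image (fun a _ a' _ hh => hφ hh)]
    refine Finset.sum_congr rfl fun a _ => ?_
    rw [wt_comp]
    simp [hφ.eq_iff, Finset.sum_ite_eq']
  · intro b _ hb
    have : wt P (φ ∘ f) b = 0 := by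
      rw [wt_comp]
      refine Finset.sum_eq_zero fun a _ => ?_
      rw [if_neg]
      intro hc
      exact hb (Finset.mem_image.2 ⟨a, Finset.mem_univ a, hc⟩)
    rw [this, Real.negMulLog_zero]

lemma neg_mul_log_le {x y : ℝ} (hx : 0 ≤ x) (hxy : x ≤ y) :
    -(x * Real.log y) ≤ Real.negMulLog x := by
  rcases eq_or_lt_of_le hx with h0 | h0
  · simp [← h0]
  · rw [Real.negMulLog, neg_mul, neg_le_neg_iff]
    exact mul_le_mul_of_nonneg_left (Real.log_le_log h0 hxy) hx

lemma ent_le_pair (hP : ∀ ω, 0 ≤ P ω) {A B : Type*} [Fintype A] [Fintype B]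
    (f : Ω → A) (g : Ω → B) : ent P f ≤ ent P (fun ω => (f ω, g ω)) := by
  classical
  have e1 : f = Prod.fst ∘ (fun ω => (f ω, g ω)) := rfl
  calc ent P f = ∑ a, Real.negMulLog (wt P f a) := rfl
    _ = ∑ a, -(wt P f a * Real.log (wt P f a)) := by simp [Real.negMulLog]
    _ = -∑ a, wt P f a * Real.log (wt P f a) := by rw [← Finset.sum_neg_distrib]
    _ = -∑ x : A × B, wt P (fun ω => (f ω, g ω)) x * Real.log (wt P f x.1) := by
        congr 1
        exact (sum_wt_mul_comp (fun ω => (f ω, g ω)) Prod.fst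
          (fun a => Real.log (wt P f a))).symm
    _ = ∑ x : A × B, -(wt P (fun ω => (f ω, g ω)) x * Real.log (wt P f x.1)) := by
        rw [← Finset.sum_neg_distrib]
    _ ≤ ∑ x : A × B, Real.negMulLog (wt P (fun ω => (f ω, g ω)) x) := by
        refine Finset.sum_le_sum fun x _ => ?_
        refine neg_mul_log_le (wt_nonneg hP _ _) ?_
        have := wt_le_wt_comp hP (fun ω => (f ω, g ω)) Prod.fst x
        exact this
    _ = ent P (fun ω => (f ω, g ω)) := rfl

lemma ent_nonneg (hP : ∀ ω, 0 ≤ P ω) (hP1 : ∑ ω, P ω = 1) {A : Type*} [Fintype A]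
    (f : Ω → A) : 0 ≤ ent P f := by
  classical
  refine Finset.sum_nonneg fun a _ => ?_
  refine Real.negMulLog_nonneg (wt_nonneg hP f a) ?_
  calc wt P f a ≤ ∑ a', wt P f a' :=
        Finset.single_le_sum (fun a' _ => wt_nonneg hP f a') (Finset.mem_univ a)
    _ = 1 := by rw [sum_wt, hP1]

lemma gibbs {ι : Type*} (s : Finset ι) (p q : ι → ℝ) (hp : ∀ i ∈ s, 0 ≤ p i)
    (hq : ∀ i ∈ s, 0 ≤ q i) (hpq : ∀ i ∈ s, p i ≠ 0 → q i ≠ 0)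
    (hsum : ∑ i ∈ s, q i ≤ ∑ i ∈ s, p i) :
    ∑ i ∈ s, p i * Real.log (q i) ≤ ∑ i ∈ s, p i * Real.log (p i) := by
  have key : ∀ i ∈ s, p i * Real.log (q i) - p i * Real.log (p i) ≤ q i - p i := by
    intro i hi
    rcases eq_or_ne (p i) 0 with h0 | h0
    · simp only [h0, zero_mul, sub_zero, sub_self]
      exact hq i hi
    · have hp' : 0 < p i := (hp i hi).lt_of_ne (Ne.symm h0)
      have hq' : 0 < q i := (hq i hi).lt_of_ne (Ne.symm (hpq i hi h0))
      have hlog : Real.log (q i / p i) ≤ q i / p i - 1 :=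
        Real.log_le_sub_one_of_pos (by positivity)
      rw [Real.log_div hq'.ne' hp'.ne'] at hlog
      have h2 := mul_le_mul_of_nonneg_left hlog hp'.le
      calc p i * Real.log (q i) - p i * Real.log (p i)
          = p i * (Real.log (q i) - Real.log (p i)) := by ring
        _ ≤ p i * (q i / p i - 1) := h2
        _ = q i - p i := by field_simp
  have h3 := Finset.sum_le_sum key
  rw [Finset.sum_sub_distrib, Finset.sum_sub_distrib] at h3
  linarith


lemma ent_submod (hP : ∀ ω, 0 ≤ P ω) {A B C : Type*} [Fintype A] [Fintype B] [Fintype C]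
    (f : Ω → A) (g : Ω → B) (h : Ω → C) :
    ent P (fun ω => (f ω, g ω, h ω)) + ent P h
      ≤ ent P (fun ω => (f ω, h ω)) + ent P (fun ω => (g ω, h ω)) := by
  classical
  set p : A × B × C → ℝ := wt P (fun ω => (f ω, g ω, h ω)) with hpdef
  set p13 : A × C → ℝ := wt P (fun ω => (f ω, h ω)) with hp13def
  set p23 : B × C → ℝ := wt P (fun ω => (g ω, h ω)) with hp23def
  set p3 : C → ℝ := wt P h with hp3def
  have hp0 : ∀ t, 0 ≤ p t := wt_nonneg hP _
  have hp130 : ∀ x, 0 ≤ p13 x := wt_nonneg hP _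
  have hp230 : ∀ x, 0 ≤ p23 x := wt_nonneg hP _
  have hp30 : ∀ c, 0 ≤ p3 c := wt_nonneg hP _
  have hle13 : ∀ t : A × B × C, p t ≤ p13 (t.1, t.2.2) :=
    fun t => wt_le_wt_comp hP (fun ω => (f ω, g ω, h ω)) (fun t : A × B × C => (t.1, t.2.2)) t
  have hle23 : ∀ t : A × B × C, p t ≤ p23 (t.2.1, t.2.2) :=
    fun t => wt_le_wt_comp hP (fun ω => (f ω, g ω, h ω)) (fun t : A × B × C => (t.2.1, t.2.2)) t
  have hle3 : ∀ x : A × C, p13 x ≤ p3 x.2 :=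
    fun x => wt_le_wt_comp hP (fun ω => (f ω, h ω)) Prod.snd x
  have hmargA : ∀ c, ∑ a, p13 (a, c) = p3 c := fun c => wt_snd_pair f h c
  have hmargB : ∀ c, ∑ b, p23 (b, c) = p3 c := fun c => wt_snd_pair g h c
  -- express all entropies as sums over the triple type
  have hentF : ent P (fun ω => (f ω, g ω, h ω)) = -∑ t : A × B × C, p t * Real.log (p t) := by
    simp [ent, Real.negMulLog, ← Finset.sum_neg_distrib, hpdef]
  have hent13 : ent P (fun ω => (f ω, h ω))
      = -∑ t : A × B × C, p t * Real.log (p13 (t.1, t.2.2)) := by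
    have e := sum_wt_mul_comp (P := P) (fun ω => (f ω, g ω, h ω))
      (fun t : A × B × C => (t.1, t.2.2)) (fun x => Real.log (p13 x))
    simp only [ent, Real.negMulLog, neg_mul, Finset.sum_neg_distrib]
    congr 1
    exact e.symm
  have hent23 : ent P (fun ω => (g ω, h ω))
      = -∑ t : A × B × C, p t * Real.log (p23 (t.2.1, t.2.2)) := by
    have e := sum_wt_mul_comp (P := P) (fun ω => (f ω, g ω, h ω))
      (fun t : A × B × C => (t.2.1, t.2.2)) (fun x => Real.log (p23 x))
    simp only [ent, Real.negMulLog, neg_mul, Finset.sum_neg_distrib]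
    congr 1
    exact e.symm
  have hent3 : ent P h = -∑ t : A × B × C, p t * Real.log (p3 t.2.2) := by
    have e := sum_wt_mul_comp (P := P) (fun ω => (f ω, g ω, h ω))
      (fun t : A × B × C => t.2.2) (fun c => Real.log (p3 c))
    simp only [ent, Real.negMulLog, neg_mul, Finset.sum_neg_distrib]
    congr 1
    exact e.symm
  -- the auxiliary density
  set q : A × B × C → ℝ := fun t =>
    if p3 t.2.2 = 0 then 0 else p13 (t.1, t.2.2) * p23 (t.2.1, t.2.2) / p3 t.2.2 with hqdef
  have hq0 : ∀ t, 0 ≤ q t := by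
    intro t
    rw [hqdef]
    dsimp only
    split
    · exact le_rfl
    · exact div_nonneg (mul_nonneg (hp130 _) (hp230 _)) (hp30 _)
  have hqsum : ∑ t : A × B × C, q t ≤ ∑ t : A × B × C, p t := by
    have h1 : ∑ t : A × B × C, q t = ∑ c, ∑ a, ∑ b, q (a, b, c) :=
      calc ∑ t : A × B × C, q t = ∑ a, ∑ b, ∑ c, q (a, b, c) := by
            simp [Fintype.sum_prod_type]
        _ = ∑ a, ∑ c, ∑ b, q (a, b, c) := Finset.sum_congr rfl fun a _ => Finset.sum_comm
        _ = ∑ c, ∑ a, ∑ b, q (a, b, c) := Finset.sum_comm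
    have h2 : ∑ t : A × B × C, p t = ∑ c, p3 c := by
      rw [sum_wt, hp3def, sum_wt]
    have h3 : ∀ c, ∑ a, ∑ b, q (a, b, c) ≤ p3 c := by
      intro c
      by_cases h0 : p3 c = 0
      · have hz : ∀ a b, q (a, b, c) = 0 := fun a b => by
          rw [hqdef]; dsimp only; rw [if_pos h0]
        simp only [hz, Finset.sum_const_zero]
        exact hp30 c
      · have hinner : ∑ a, ∑ b, q (a, b, c)
            = (∑ a, p13 (a, c)) * ((∑ b, p23 (b, c)) / p3 c) := by
          rw [Finset.sum_mul]
          refine Finset.sum_congr rfl fun a _ => ?_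
          have hq1 : ∀ b, q (a, b, c) = p13 (a, c) * (p23 (b, c) / p3 c) := by
            intro b
            rw [hqdef]; dsimp only
            rw [if_neg h0, mul_div_assoc]
          simp only [hq1]
          rw [← Finset.mul_sum, ← Finset.sum_div]
        rw [hinner, hmargA, hmargB, div_self h0, mul_one]
    calc ∑ t : A × B × C, q t = ∑ c, ∑ a, ∑ b, q (a, b, c) := h1
      _ ≤ ∑ c, p3 c := Finset.sum_le_sum fun c _ => h3 c
      _ = ∑ t : A × B × C, p t := h2.symm
  have hpq : ∀ t : A × B × C, p t ≠ 0 → q t ≠ 0 := by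
    intro t hpt
    have hptpos : 0 < p t := (hp0 t).lt_of_ne (Ne.symm hpt)
    have h13 : 0 < p13 (t.1, t.2.2) := lt_of_lt_of_le hptpos (hle13 t)
    have h23 : 0 < p23 (t.2.1, t.2.2) := lt_of_lt_of_le hptpos (hle23 t)
    have h3 : 0 < p3 t.2.2 := lt_of_lt_of_le h13 (hle3 (t.1, t.2.2))
    rw [hqdef]
    simp only [if_neg h3.ne']
    positivity
  have hlogq : ∀ t : A × B × C, p t * Real.log (q t)
      = p t * (Real.log (p13 (t.1, t.2.2)) + Real.log (p23 (t.2.1, t.2.2))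
          - Real.log (p3 t.2.2)) := by
    intro t
    rcases eq_or_ne (p t) 0 with hpt | hpt
    · rw [hpt, zero_mul, zero_mul]
    · have hptpos : 0 < p t := (hp0 t).lt_of_ne (Ne.symm hpt)
      have h13 : 0 < p13 (t.1, t.2.2) := lt_of_lt_of_le hptpos (hle13 t)
      have h23 : 0 < p23 (t.2.1, t.2.2) := lt_of_lt_of_le hptpos (hle23 t)
      have h3 : 0 < p3 t.2.2 := lt_of_lt_of_le h13 (hle3 (t.1, t.2.2))
      have : q t = p13 (t.1, t.2.2) * p23 (t.2.1, t.2.2) / p3 t.2.2 := by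
        rw [hqdef]
        simp only [if_neg h3.ne']
      rw [this, Real.log_div (mul_ne_zero h13.ne' h23.ne') h3.ne',
        Real.log_mul h13.ne' h23.ne']
  have hgibbs := gibbs Finset.univ p q (fun t _ => hp0 t) (fun t _ => hq0 t)
    (fun t _ => hpq t) hqsum
  have key : ∑ t : A × B × C, (p t * Real.log (p13 (t.1, t.2.2))
        + p t * Real.log (p23 (t.2.1, t.2.2)) - p t * Real.log (p3 t.2.2))
      ≤ ∑ t : A × B × C, p t * Real.log (p t) := by
    refine le_trans (le_of_eq ?_) hgibbs
    refine Finset.sum_congr rfl fun t _ => ?_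
    rw [hlogq t]
    ring
  rw [hentF, hent13, hent23, hent3]
  rw [Finset.sum_sub_distrib, Finset.sum_add_distrib] at key
  linarith


section Sets

variable {n : ℕ} {V : Fin n → Type*} [∀ i, Fintype (V i)] [∀ i, DecidableEq (V i)]
  (W : ∀ i, Ω → V i) (P : Ω → ℝ)

noncomputable def EW (T : Finset (Fin n)) : ℝ :=
  ent P (fun ω => fun i : T => W i.1 ω)

lemma EW_def (T : Finset (Fin n)) :
    EW W P T = ent P (fun ω => fun i : T => W i.1 ω) := rfl

lemma pair_eq (S T : Finset (Fin n)) :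
    ent P (fun ω => ((fun i : S => W i.1 ω), (fun i : T => W i.1 ω)))
      = EW W P (S ∪ T) := by
  have h := ent_comp_inj (P := P) (f := fun ω => fun i : ↥(S ∪ T) => W i.1 ω)
    (φ := fun (x : ∀ i : ↥(S ∪ T), V i.1) =>
      ((fun i : S => x ⟨i.1, Finset.mem_union_left T i.2⟩),
       (fun i : T => x ⟨i.1, Finset.mem_union_right S i.2⟩)))
    (hφ := by
      intro x y hxy
      funext i
      obtain ⟨i, hi⟩ := i
      rcases Finset.mem_union.1 hi with hS | hT
      · exact congrFun (congrArg Prod.fst hxy) ⟨i, hS⟩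
      · exact congrFun (congrArg Prod.snd hxy) ⟨i, hT⟩)
  exact h

lemma triple_eq (S T R : Finset (Fin n)) :
    ent P (fun ω => ((fun i : S => W i.1 ω), (fun i : T => W i.1 ω),
        (fun i : R => W i.1 ω)))
      = EW W P (S ∪ T ∪ R) := by
  have h := ent_comp_inj (P := P) (f := fun ω => fun i : ↥(S ∪ T ∪ R) => W i.1 ω)
    (φ := fun (x : ∀ i : ↥(S ∪ T ∪ R), V i.1) =>
      ((fun i : S => x ⟨i.1, Finset.mem_union_left R (Finset.mem_union_left T i.2)⟩),
       (fun i : T => x ⟨i.1, Finset.mem_union_left R (Finset.mem_union_right S i.2)⟩),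
       (fun i : R => x ⟨i.1, Finset.mem_union_right (S ∪ T) i.2⟩)))
    (hφ := by
      intro x y hxy
      funext i
      obtain ⟨i, hi⟩ := i
      rcases Finset.mem_union.1 hi with hST | hR
      · rcases Finset.mem_union.1 hST with hS | hT
        · exact congrFun (congrArg Prod.fst hxy) ⟨i, hS⟩
        · exact congrFun (congrArg (fun z => z.2.1) hxy) ⟨i, hT⟩
      · exact congrFun (congrArg (fun z => z.2.2) hxy) ⟨i, hR⟩)
  exact h

lemma EW_mono (hP : ∀ ω, 0 ≤ P ω) {S T : Finset (Fin n)} (hST : S ⊆ T) :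
    EW W P S ≤ EW W P T := by
  have h1 : EW W P S
      ≤ ent P (fun ω => ((fun i : S => W i.1 ω), (fun i : T => W i.1 ω))) :=
    ent_le_pair hP _ _
  rw [pair_eq, Finset.union_eq_right.2 hST] at h1
  exact h1

lemma EW_submod (hP : ∀ ω, 0 ≤ P ω) (S T : Finset (Fin n)) :
    EW W P (S ∪ T) + EW W P (S ∩ T) ≤ EW W P S + EW W P T := by
  have h := ent_submod hP (P := P) (fun ω => fun i : S => W i.1 ω)
    (fun ω => fun i : T => W i.1 ω) (fun ω => fun i : ↥(S ∩ T) => W i.1 ω)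
  rw [triple_eq, pair_eq, pair_eq, ← EW_def] at h
  rw [Finset.union_eq_left.2 (Finset.inter_subset_left.trans Finset.subset_union_left),
    Finset.union_eq_left.2 Finset.inter_subset_left,
    Finset.union_eq_left.2 Finset.inter_subset_right] at h
  exact h

lemma EW_nonneg (hP : ∀ ω, 0 ≤ P ω) (hP1 : ∑ ω, P ω = 1) (T : Finset (Fin n)) :
    0 ≤ EW W P T := ent_nonneg hP hP1 _


lemma EW_localHan (hP : ∀ ω, 0 ≤ P ω) (hP1 : ∑ ω, P ω = 1) (T : Finset (Fin n)) :
    ((T.card : ℝ) - 1) * EW W P T ≤ ∑ i ∈ T, EW W P (T.erase i) := by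
  classical
  have claim : ∀ U : Finset (Fin n), U ⊆ T →
      (U.card : ℝ) * EW W P T + EW W P (T \ U)
        ≤ (∑ i ∈ U, EW W P (T.erase i)) + EW W P T := by
    intro U
    induction U using Finset.induction_on with
    | empty => simp
    | @insert a U ha ih =>
      intro hins
      have haT : a ∈ T := hins (Finset.mem_insert_self a U)
      have hUT : U ⊆ T := (Finset.subset_insert a U).trans hins
      have ih' := ih hUT
      have hsub := EW_submod W P hP (T.erase a) (T \ U)
      have hu : T.erase a ∪ (T \ U) = T := by
        ext i
        simp only [Finset.mem_union, Finset.mem_erase, Finset.mem_sdiff]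
        constructor
        · rintro (⟨_, hi⟩ | ⟨hi, _⟩) <;> exact hi
        · intro hi
          by_cases hia : i = a
          · exact Or.inr ⟨hi, fun hiU => ha (hia ▸ hiU)⟩
          · exact Or.inl ⟨hia, hi⟩
      have hi2 : T.erase a ∩ (T \ U) = T \ insert a U := by
        ext i
        simp only [Finset.mem_inter, Finset.mem_erase, Finset.mem_sdiff,
          Finset.mem_insert]
        tauto
      rw [hu, hi2] at hsub
      rw [Finset.card_insert_of_notMem ha, Finset.sum_insert ha]
      push_cast
      linarith
  have h := claim T (subset_refl T)
  rw [Finset.sdiff_self] at h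
  have h0 : 0 ≤ EW W P (∅ : Finset (Fin n)) := EW_nonneg W P hP hP1 ∅
  linarith

lemma EW_count (m : ℕ) :
    ∑ T ∈ Finset.univ.powersetCard (m + 1), ∑ i ∈ T, EW W P (T.erase i)
      = ((n - m : ℕ) : ℝ) * ∑ S ∈ Finset.univ.powersetCard m, EW W P S := by
  classical
  have hrhs : ((n - m : ℕ) : ℝ) * ∑ S ∈ Finset.univ.powersetCard m, EW W P S
      = ∑ S ∈ Finset.univ.powersetCard m, ∑ _j ∈ Sᶜ, EW W P S := by
    rw [Finset.mul_sum]
    refine Finset.sum_congr rfl fun S hS => ?_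
    rw [Finset.sum_const, nsmul_eq_mul]
    congr 1
    rw [Finset.mem_powersetCard] at hS
    rw [Finset.card_compl, hS.2, Fintype.card_fin]
  rw [hrhs, Finset.sum_sigma', Finset.sum_sigma']
  refine Finset.sum_nbij' (fun x => ⟨x.1.erase x.2, x.2⟩)
    (fun y => ⟨insert y.2 y.1, y.2⟩) ?_ ?_ ?_ ?_ ?_
  · rintro ⟨T, i⟩ hx
    rw [Finset.mem_sigma] at hx ⊢
    obtain ⟨hT, hiT⟩ := hx
    rw [Finset.mem_powersetCard] at hT
    constructor
    · rw [Finset.mem_powersetCard]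
      exact ⟨Finset.subset_univ _, by rw [Finset.card_erase_of_mem hiT, hT.2]; omega⟩
    · simp
  · rintro ⟨S, j⟩ hy
    rw [Finset.mem_sigma] at hy ⊢
    obtain ⟨hS, hjS⟩ := hy
    rw [Finset.mem_powersetCard] at hS
    rw [Finset.mem_compl] at hjS
    constructor
    · rw [Finset.mem_powersetCard]
      exact ⟨Finset.subset_univ _, by rw [Finset.card_insert_of_notMem hjS, hS.2]⟩
    · exact Finset.mem_insert_self j S
  · rintro ⟨T, i⟩ hx
    rw [Finset.mem_sigma] at hx
    simp [Finset.insert_erase hx.2]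
  · rintro ⟨S, j⟩ hy
    rw [Finset.mem_sigma, Finset.mem_compl] at hy
    simp [Finset.erase_insert hy.2]
  · rintro ⟨T, i⟩ _
    rfl


lemma EW_step (hP : ∀ ω, 0 ≤ P ω) (hP1 : ∑ ω, P ω = 1) (m : ℕ) :
    (m : ℝ) * ∑ T ∈ Finset.univ.powersetCard (m + 1), EW W P T
      ≤ ((n - m : ℕ) : ℝ) * ∑ S ∈ Finset.univ.powersetCard m, EW W P S := by
  rw [← EW_count, Finset.mul_sum]
  refine Finset.sum_le_sum fun T hT => ?_
  rw [Finset.mem_powersetCard] at hT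
  have h := EW_localHan W P hP hP1 T
  rw [hT.2] at h
  push_cast at h ⊢
  linarith

lemma EW_chain (hP : ∀ ω, 0 ≤ P ω) (hP1 : ∑ ω, P ω = 1) (k : ℕ) (hk1 : 1 ≤ k) :
    ∀ m, k ≤ m → m ≤ n →
      ((k : ℝ) * (n.choose k : ℕ)) * ∑ T ∈ Finset.univ.powersetCard m, EW W P T
        ≤ ((m : ℝ) * (n.choose m : ℕ)) * ∑ T ∈ Finset.univ.powersetCard k, EW W P T := by
  intro m hkm
  induction m, hkm using Nat.le_induction with
  | base => intro _; exact le_of_eq rfl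
  | succ m hkm ih =>
    intro hm1n
    have hmn : m ≤ n := le_trans (Nat.le_succ m) hm1n
    have ihm := ih hmn
    have hstep := EW_step W P hP hP1 m
    have hm0 : (0 : ℝ) < m := by
      have : 0 < m := lt_of_lt_of_le hk1 hkm
      exact_mod_cast this
    have hchoose := Nat.choose_succ_right_eq n m
    have hcast : ((n - m : ℕ) : ℝ) * (n.choose m : ℕ)
        = ((m : ℝ) + 1) * (n.choose (m + 1) : ℕ) := by
      have h' : ((n.choose (m + 1) * (m + 1) : ℕ) : ℝ)
          = ((n.choose m * (n - m) : ℕ) : ℝ) := by rw [hchoose]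
      push_cast at h'
      linarith
    set AK := ∑ T ∈ Finset.univ.powersetCard k, EW W P T
    set AM := ∑ T ∈ Finset.univ.powersetCard m, EW W P T
    set AM1 := ∑ T ∈ Finset.univ.powersetCard (m + 1), EW W P T
    have hkC0 : (0 : ℝ) ≤ (k : ℝ) * (n.choose k : ℕ) := by positivity
    have hnm0 : (0 : ℝ) ≤ ((n - m : ℕ) : ℝ) := by positivity
    have h1 : (m : ℝ) * (((k : ℝ) * (n.choose k : ℕ)) * AM1)
        ≤ (m : ℝ) * ((((m : ℕ) + 1 : ℝ) * (n.choose (m + 1) : ℕ)) * AK) := by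
      calc (m : ℝ) * (((k : ℝ) * (n.choose k : ℕ)) * AM1)
          = ((k : ℝ) * (n.choose k : ℕ)) * ((m : ℝ) * AM1) := by ring
        _ ≤ ((k : ℝ) * (n.choose k : ℕ)) * (((n - m : ℕ) : ℝ) * AM) :=
            mul_le_mul_of_nonneg_left hstep hkC0
        _ = ((n - m : ℕ) : ℝ) * (((k : ℝ) * (n.choose k : ℕ)) * AM) := by ring
        _ ≤ ((n - m : ℕ) : ℝ) * (((m : ℝ) * (n.choose m : ℕ)) * AK) :=
            mul_le_mul_of_nonneg_left ihm hnm0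
        _ = (m : ℝ) * ((((n - m : ℕ) : ℝ) * (n.choose m : ℕ)) * AK) := by ring
        _ = (m : ℝ) * ((((m : ℕ) + 1 : ℝ) * (n.choose (m + 1) : ℕ)) * AK) := by
            rw [hcast]
    have h2 := le_of_mul_le_mul_left h1 hm0
    rw [Nat.cast_add_one]
    exact h2

end Sets

lemma bridge {Ω A : Type*} [Fintype Ω] [Fintype A] (μ : PMF Ω) (f : Ω → A) :
    pmfEntropy (μ.map f) = ent (fun ω => (μ ω).toReal) f := by
  classical
  have hwt : ∀ b, ((μ.map f) b).toReal = wt (fun ω => (μ ω).toReal) f b := by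
    intro b
    rw [PMF.map_apply, tsum_fintype, ENNReal.toReal_sum (by
      intro ω _
      split
      · exact PMF.apply_ne_top μ ω
      · exact ENNReal.zero_ne_top)]
    refine Finset.sum_congr rfl fun ω _ => ?_
    by_cases h : f ω = b
    · simp [h]
    · simp [h, Ne.symm h]
  unfold pmfEntropy ent
  simp only [hwt, Real.negMulLog, neg_mul, Finset.sum_neg_distrib]

lemma pmf_toReal_nonneg {Ω : Type*} [Fintype Ω] (μ : PMF Ω) (ω : Ω) :
    0 ≤ (μ ω).toReal := ENNReal.toReal_nonneg

lemma pmf_toReal_sum {Ω : Type*} [Fintype Ω] (μ : PMF Ω) :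
    ∑ ω, (μ ω).toReal = 1 := by
  have h := μ.tsum_coe
  rw [tsum_fintype] at h
  have h2 := congrArg ENNReal.toReal h
  rw [ENNReal.toReal_sum (fun ω _ => PMF.apply_ne_top μ ω)] at h2
  simpa using h2

end HansAux

/-- Han's inequality: for jointly distributed random variables `W_1, ..., W_n` with
finite ranges and `1 ≤ k ≤ n`,
`(k/n)·H(W_1,...,W_n) ≤ (1/C(n,k)) · Σ_{T ⊆ [n], |T| = k} H(W_T)`. -/
theorem hans_inequality {Ω : Type*} [Fintype Ω] (μ : PMF Ω) {n : ℕ}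
    (V : Fin n → Type) [∀ i, Fintype (V i)] [∀ i, DecidableEq (V i)]
    (W : ∀ i, Ω → V i) (k : ℕ) (hk1 : 1 ≤ k) (hkn : k ≤ n) :
    (k / n : ℝ) * pmfEntropy (μ.map (fun ω => fun i => W i ω))
      ≤ (1 / (n.choose k) : ℝ) *
        ∑ T ∈ Finset.univ.powersetCard k,
          pmfEntropy (Ω := ∀ i : T, V i.1) (μ.map (fun ω => fun i : T => W i.1 ω)) := by
  classical
  set P : Ω → ℝ := fun ω => (μ ω).toReal with hPdef
  have hP : ∀ ω, 0 ≤ P ω := HansAux.pmf_toReal_nonneg μ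
  have hP1 : ∑ ω, P ω = 1 := HansAux.pmf_toReal_sum μ
  -- the full entropy equals EW on univ
  have hfull : pmfEntropy (μ.map (fun ω => fun i => W i ω))
      = HansAux.EW W P Finset.univ := by
    rw [HansAux.bridge]
    have h := HansAux.ent_comp_inj (P := P) (f := fun ω => fun i => W i ω)
      (φ := fun (x : ∀ i, V i) => fun i : (Finset.univ : Finset (Fin n)) => x i.1)
      (hφ := by
        intro x y hxy
        funext i
        exact congrFun hxy ⟨i, Finset.mem_univ i⟩)
    exact h.symm
  have hsum : ∑ T ∈ Finset.univ.powersetCard k,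
        pmfEntropy (Ω := ∀ i : T, V i.1) (μ.map (fun ω => fun i : T => W i.1 ω))
      = ∑ T ∈ Finset.univ.powersetCard k, HansAux.EW W P T :=
    Finset.sum_congr rfl fun T _ => HansAux.bridge μ _
  rw [hfull, hsum]
  have hchain := HansAux.EW_chain W P hP hP1 k hk1 n hkn le_rfl
  have hpcn : (Finset.univ : Finset (Fin n)).powersetCard n = {Finset.univ} := by
    have h := Finset.powersetCard_self (Finset.univ : Finset (Fin n))
    rwa [Finset.card_univ, Fintype.card_fin] at h
  rw [hpcn, Finset.sum_singleton, Nat.choose_self] at hchain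
  have hn0 : (0 : ℝ) < n := by
    have : 0 < n := lt_of_lt_of_le hk1 hkn
    exact_mod_cast this
  have hC0 : (0 : ℝ) < (n.choose k : ℕ) := by
    exact_mod_cast Nat.choose_pos hkn
  rw [div_mul_eq_mul_div, one_div, inv_mul_eq_div, div_le_div_iff₀ hn0 hC0]
  push_cast at hchain ⊢
  nlinarith [hchain]
end

section
/- Let D_L = ⌈L/C⌉ with C = (1 − c)/(1 − c^m), c = (k+t−1)/n ∈ (0,1), and subpacketization L = β(n−k−t+1) for a positive integer β. Then D_L = βn − ⌊βn·c^m⌋. In particular D_L = βn (the asymptotic download cost is attained) if and only if β < n^{m−1}/(k+t−1)^m, equivalently m > (log n + log β)/(log n − log(k+t−1)). -/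
/-!
Writing `c = (k+t-1)/n`, the subpacketization is `L = βn(1 - c)`, so `L/C = βn(1 - c^m)` is the
integer `βn` minus `x = βn·c^m ≥ 0`, and hence `⌈L/C⌉ = βn - ⌊x⌋`. This equals `βn` exactly when
`x < 1`; clearing denominators gives `β < n^(m-1)/(k+t-1)^m`, and taking logarithms gives the
bound on `m`.
-/

open Real

lemma mul_div_div_of_ne_zero {F : Type*} [Field F] {a y : F} (z : F) (hy : y ≠ 0) :
    a * y / (y / z) = a * z := by
  rw [div_div_eq_mul_div, mul_div_right_comm, mul_div_cancel_right₀ _ hy]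

lemma Int.ceil_intCast_sub {R : Type*} [Ring R] [LinearOrder R] [FloorRing R] [IsOrderedRing R]
    (z : ℤ) (x : R) : ⌈(z : R) - x⌉ = z - ⌊x⌋ := by
  rw [sub_eq_neg_add, Int.ceil_add_intCast, Int.ceil_neg, neg_add_eq_sub]

lemma Int.sub_floor_eq_self_iff {R : Type*} [Ring R] [LinearOrder R] [FloorRing R]
    (z : ℤ) {x : R} (hx : 0 ≤ x) : z - ⌊x⌋ = z ↔ x < 1 := by
  rw [sub_eq_self, Int.floor_eq_zero_iff, Set.mem_Ico, and_iff_right hx]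

section

variable {N K b : ℝ} {m : ℕ}

lemma mul_mul_div_pow (hN : N ≠ 0) (hm : 1 ≤ m) :
    b * N * (K / N) ^ m = b * K ^ m / N ^ (m - 1) := by
  obtain ⟨j, rfl⟩ : ∃ j, m = j + 1 := ⟨m - 1, by omega⟩
  rw [Nat.add_sub_cancel, div_pow, pow_succ N]
  field_simp

lemma mul_mul_div_pow_lt_one_iff (hN : 0 < N) (hK : 0 < K) (hm : 1 ≤ m) :
    b * N * (K / N) ^ m < 1 ↔ b < N ^ (m - 1) / K ^ m := by
  rw [mul_mul_div_pow hN.ne' hm, div_lt_one (by positivity), lt_div_iff₀ (by positivity)]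

lemma lt_pow_div_pow_iff_log (hb : 0 < b) (hK : 0 < K) (hKN : K < N) (hm : 1 ≤ m) :
    b < N ^ (m - 1) / K ^ m ↔ (m : ℝ) > (log N + log b) / (log N - log K) := by
  have hN : 0 < N := hK.trans hKN
  have hlog : 0 < log N - log K := sub_pos.mpr (log_lt_log hK hKN)
  rw [gt_iff_lt, div_lt_iff₀ hlog, ← log_lt_log_iff hb (by positivity),
    log_div (by positivity) (by positivity), log_pow, log_pow, Nat.cast_sub hm, Nat.cast_one]
  constructor <;> intro h <;> linarith

end

/-- Download cost `D_L = ⌈L/C⌉` for subpacketization `L = β(n-k-t+1)` and capacity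
`C = (1-c)/(1-c^m)`, `c = (k+t-1)/n`: it equals `βn - ⌊βn·c^m⌋`, and the asymptotic
download cost `βn` is attained iff `β < n^{m-1}/(k+t-1)^m`, equivalently
`m > (log n + log β)/(log n - log(k+t-1))`. -/
theorem download_cost_asymptotic {n k t m β : ℕ} (hk : 1 ≤ k) (ht : 1 ≤ t)
    (hn : k + t - 1 < n) (hm : 2 ≤ m) (hβ : 1 ≤ β) :
    (⌈((β : ℝ) * ((n : ℝ) - (k : ℝ) - (t : ℝ) + 1)) /
        ((1 - ((k + t - 1 : ℕ) : ℝ) / n) / (1 - (((k + t - 1 : ℕ) : ℝ) / n) ^ m))⌉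
      = (β * n : ℕ) - ⌊((β : ℝ) * (n : ℝ)) * (((k + t - 1 : ℕ) : ℝ) / n) ^ m⌋) ∧
    (⌈((β : ℝ) * ((n : ℝ) - (k : ℝ) - (t : ℝ) + 1)) /
        ((1 - ((k + t - 1 : ℕ) : ℝ) / n) / (1 - (((k + t - 1 : ℕ) : ℝ) / n) ^ m))⌉
        = (β * n : ℕ)
      ↔ (β : ℝ) < (n : ℝ) ^ (m - 1) / ((k + t - 1 : ℕ) : ℝ) ^ m) ∧
    ((β : ℝ) < (n : ℝ) ^ (m - 1) / ((k + t - 1 : ℕ) : ℝ) ^ m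
      ↔ (m : ℝ) > (Real.log n + Real.log β) /
          (Real.log n - Real.log ((k + t - 1 : ℕ) : ℝ))) := by
  set K : ℝ := ((k + t - 1 : ℕ) : ℝ) with hK
  have hK0 : 0 < K := by rw [hK]; exact_mod_cast (by omega : 0 < k + t - 1)
  have hKn : K < n := by rw [hK]; exact_mod_cast hn
  have hn0 : (0 : ℝ) < n := hK0.trans hKn
  have hm1 : 1 ≤ m := by omega
  have hL : (β : ℝ) * ((n : ℝ) - k - t + 1) = (β * n : ℕ) * (1 - K / n) := by
    rw [hK, Nat.cast_sub (by omega)]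
    field_simp
    push_cast
    ring
  have hLC : (β : ℝ) * ((n : ℝ) - k - t + 1) / ((1 - K / n) / (1 - (K / n) ^ m))
      = ((β * n : ℕ) : ℤ) - (β : ℝ) * n * (K / n) ^ m := by
    rw [hL, mul_div_div_of_ne_zero _ (sub_ne_zero.mpr ((div_lt_one hn0).mpr hKn).ne')]
    push_cast
    ring
  have hx : 0 ≤ (β : ℝ) * n * (K / n) ^ m := by positivity
  rw [hLC, Int.ceil_intCast_sub, Int.sub_floor_eq_self_iff _ hx,
    mul_mul_div_pow_lt_one_iff hn0 hK0 hm1]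
  exact ⟨rfl, Iff.rfl, lt_pow_div_pow_iff_log (by exact_mod_cast hβ) hK0 hKn hm1⟩
end
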